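/- For every integer t ≥ 1, there exists a Las Vegas one-way probabilistic one-counter automaton (Las Vegas 1P1CA) over the alphabet {a,b,c,d} that solves the promise problem ONE-NONE(t) with success probability 1 − (2/3)^t: every yes-instance is accepted with probability at least 1 − (2/3)^t and rejected with probability 0, and every no-instance is rejected with probability at least 1 − (2/3)^t and accepted with probability 0. -/

import Mathlib

/-- Input symbols extended with the left (`cent`) and right (`dollar`) end-markers. -/
inductive TSym (α : Type) : Type
  | cent : TSym α
  | letter : α → TSym α
  | dollar : TSym α

/-- The tape content `¢ w $` for an input word `w`. -/
def tagged {α : Type} (w : List α) : List (TSym α) :=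
  TSym.cent :: (w.map TSym.letter ++ [TSym.dollar])

/-- The three kinds of states of a Las Vegas automaton. -/
inductive LVDec : Type
  | acc : LVDec
  | rej : LVDec
  | unk : LVDec
deriving DecidableEq

/-- A Las Vegas one-way probabilistic one-counter automaton: the states are
partitioned into accepting, rejecting and neutral states via `lvdec`. -/
structure LasVegas1P1CA (α : Type) where
  Q : Type
  [fintypeQ : Fintype Q]
  [decQ : DecidableEq Q]
  q0 : Q
  lvdec : Q → LVDec
  m : ℕ
  δ : Q → TSym α → Bool → Q → ℤ → ℝ
  nonneg : ∀ q σ z q' c, 0 ≤ δ q σ z q' c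
  support : ∀ q σ z q' c, δ q σ z q' c ≠ 0 → |c| ≤ (m : ℤ)
  total : ∀ q σ z, (∑ q' : Q, ∑ c ∈ Finset.Icc (-(m : ℤ)) (m : ℤ), δ q σ z q' c) = 1

attribute [instance] LasVegas1P1CA.fintypeQ LasVegas1P1CA.decQ

namespace LasVegas1P1CA

variable {α : Type} (M : LasVegas1P1CA α)

/-- One step of the evolution of the probability distribution over configurations. -/
noncomputable def stepD (μ : M.Q × ℤ → ℝ) (σ : TSym α) : M.Q × ℤ → ℝ :=
  fun p' => ∑ q : M.Q, ∑ c ∈ Finset.Icc (-(M.m : ℤ)) (M.m : ℤ),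
    μ (q, p'.2 - c) * M.δ q σ (decide (p'.2 - c = 0)) p'.1 c

/-- Initial distribution: point mass on `(q0, 0)`. -/
def initD : M.Q × ℤ → ℝ := fun p => if p = (M.q0, 0) then 1 else 0

/-- Distribution over configurations after reading `¢ w $`. -/
noncomputable def finalD (w : List α) : M.Q × ℤ → ℝ := (tagged w).foldl M.stepD M.initD

/-- Total probability of computation paths ending in an accepting state. -/
noncomputable def accProb (w : List α) : ℝ :=
  ∑' p : M.Q × ℤ, if M.lvdec p.1 = LVDec.acc then M.finalD w p else 0

/-- Total probability of computation paths ending in a rejecting state. -/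
noncomputable def rejProb (w : List α) : ℝ :=
  ∑' p : M.Q × ℤ, if M.lvdec p.1 = LVDec.rej then M.finalD w p else 0

end LasVegas1P1CA

/-- The alphabet `{a, b, c, d}`. -/
inductive ΓN : Type
  | a : ΓN
  | b : ΓN
  | c : ΓN
  | d : ΓN
deriving DecidableEq

/-- Exactly one of three propositions holds. -/
def exactlyOne (P Q R : Prop) : Prop :=
  (P ∧ ¬Q ∧ ¬R) ∨ (¬P ∧ Q ∧ ¬R) ∨ (¬P ∧ ¬Q ∧ R)

/-- `#_a(u) = #_b(u)`. -/
def eqAB (u : List ΓN) : Prop := u.count ΓN.a = u.count ΓN.b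
/-- `#_b(u) = #_c(u)`. -/
def eqBC (u : List ΓN) : Prop := u.count ΓN.b = u.count ΓN.c
/-- `#_c(u) = #_a(u)`. -/
def eqCA (u : List ΓN) : Prop := u.count ΓN.c = u.count ΓN.a

/-- The language `ONE`: strings `u ++ y` with `u ∈ {a,b,c}*`, `y ∈ {d}*`,
`|y| ≥ |u|`, and exactly one of the three count equalities holding for `u`. -/
def ONE : Language ΓN :=
  {w | ∃ u y : List ΓN, w = u ++ y ∧ (∀ x ∈ u, x ≠ ΓN.d) ∧ (∀ x ∈ y, x = ΓN.d) ∧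
    u.length ≤ y.length ∧ exactlyOne (eqAB u) (eqBC u) (eqCA u)}

/-- The language `NONE`: as `ONE`, but none of the three count equalities holds. -/
def NONE : Language ΓN :=
  {w | ∃ u y : List ΓN, w = u ++ y ∧ (∀ x ∈ u, x ≠ ΓN.d) ∧ (∀ x ∈ y, x = ΓN.d) ∧
    u.length ≤ y.length ∧ ¬ eqAB u ∧ ¬ eqBC u ∧ ¬ eqCA u}

/-!
Between blocks the automaton waits with counter `0`. On the first letter of a block it picks one
of the equalities `#a = #b`, `#b = #c`, `#c = #a` uniformly at random and tracks the difference of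
the two counts, its absolute value in the counter and its sign in the state. The trailing `d`s
(at least as many as the letters before them) bring the counter back to `0`, and the first `d`
reveals whether the difference was zero. So a block of `ONE` is detected with probability `1/3`
and a block of `NONE` never. A parity bit in the state, flipped after every undetected block,
decides the verdict on detection: accept in blocks at odd positions, reject at even ones. In a
yes-instance the `ONE` blocks are exactly those at odd positions, in a no-instance those at even
positions, so a wrong verdict is impossible and a verdict is reached unless all `t` independent
tests fail, which happens with probability `(2/3)^t`.
-/

section UniformKernel

variable {Q : Type} [DecidableEq Q]

noncomputable def uniformKernel (l : List (Q × ℤ)) (q : Q) (c : ℤ) : ℝ :=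
  (Multiset.count (q, c) l : ℝ) / l.length

lemma uniformKernel_nonneg (l : List (Q × ℤ)) (q : Q) (c : ℤ) : 0 ≤ uniformKernel l q c := by
  unfold uniformKernel; positivity

lemma abs_le_of_uniformKernel_ne_zero {l : List (Q × ℤ)} {m : ℤ} (hl : ∀ x ∈ l, |x.2| ≤ m)
    {q : Q} {c : ℤ} (h : uniformKernel l q c ≠ 0) : |c| ≤ m := by
  have hc : Multiset.count (q, c) l ≠ 0 := fun h0 => h (by simp [uniformKernel, h0])
  exact hl (q, c) (Multiset.mem_coe.1 (Multiset.count_ne_zero.1 hc))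

lemma sum_uniformKernel [Fintype Q] {l : List (Q × ℤ)} {m : ℕ} (hne : l ≠ [])
    (hl : ∀ x ∈ l, |x.2| ≤ m) :
    ∑ q, ∑ c ∈ Finset.Icc (-(m : ℤ)) m, uniformKernel l q c = 1 := by
  have hcount : ∑ x ∈ Finset.univ ×ˢ Finset.Icc (-(m : ℤ)) m,
      Multiset.count x (l : Multiset (Q × ℤ)) = l.length := by
    simpa using Multiset.sum_count_eq_card (s := Finset.univ ×ˢ Finset.Icc (-(m : ℤ)) m)
      (m := (l : Multiset (Q × ℤ))) fun x hx => by simpa [← abs_le] using hl x hx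
  have hlen : (l.length : ℝ) ≠ 0 := by simpa using hne
  simp only [uniformKernel, ← Finset.sum_div, ← Finset.sum_product', ← Nat.cast_sum, hcount]
  exact div_self hlen

end UniformKernel

namespace LasVegas1P1CA

variable {α : Type} (M : LasVegas1P1CA α)

def dirac (x : M.Q × ℤ) : M.Q × ℤ → ℝ := Pi.single x 1

noncomputable def step (σ : TSym α) : (M.Q × ℤ → ℝ) →ₗ[ℝ] (M.Q × ℤ → ℝ) where
  toFun μ := M.stepD μ σ
  map_add' μ ν := by ext; simp only [stepD, Pi.add_apply, add_mul, Finset.sum_add_distrib]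
  map_smul' a μ := by ext; simp [stepD, Finset.mul_sum, mul_assoc]

noncomputable def run : List (TSym α) → (M.Q × ℤ → ℝ) →ₗ[ℝ] (M.Q × ℤ → ℝ)
  | [] => LinearMap.id
  | σ :: w => run w ∘ₗ M.step σ

@[simp] lemma run_nil (μ : M.Q × ℤ → ℝ) : M.run [] μ = μ := rfl

@[simp] lemma run_cons (σ : TSym α) (w : List (TSym α)) (μ : M.Q × ℤ → ℝ) :
    M.run (σ :: w) μ = M.run w (M.stepD μ σ) := rfl

lemma run_append (w v : List (TSym α)) (μ : M.Q × ℤ → ℝ) :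
    M.run (w ++ v) μ = M.run v (M.run w μ) := by
  induction w generalizing μ with
  | nil => rfl
  | cons σ w ih => exact ih _

lemma run_eq_foldl (w : List (TSym α)) (μ : M.Q × ℤ → ℝ) : M.run w μ = w.foldl M.stepD μ := by
  induction w generalizing μ with
  | nil => rfl
  | cons σ w ih => exact ih _

lemma finalD_eq_run (w : List α) : M.finalD w = M.run (tagged w) (M.dirac (M.q0, 0)) := by
  rw [run_eq_foldl, finalD]
  congr 1
  ext p
  simp [initD, dirac, Pi.single_apply]

lemma stepD_dirac (q : M.Q) (n : ℤ) (σ : TSym α) :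
    M.stepD (M.dirac (q, n)) σ = fun p => M.δ q σ (decide (n = 0)) p.1 (p.2 - n) := by
  ext ⟨q', k⟩
  have hsupp : M.δ q σ (decide (n = 0)) q' (k - n) ≠ 0 → k - n ∈ Finset.Icc (-(M.m : ℤ)) M.m :=
    fun h => Finset.mem_Icc.2 (abs_le.1 (M.support _ _ _ _ _ h))
  simp only [stepD, dirac, Pi.single_apply, Prod.mk.injEq, ite_and, ite_mul, one_mul, zero_mul]
  rw [Finset.sum_eq_single q (fun _ _ h => by simp [h]) (by simp)]
  simp only [if_true]
  rw [Finset.sum_eq_single (k - n) (fun c _ h => if_neg (by omega)) (fun h => by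
      simp only [sub_sub_cancel, if_true]; by_contra h'; exact h (hsupp h'))]
  simp

lemma stepD_dirac_of_uniform {q : M.Q} {n : ℤ} {σ : TSym α} {l : List (M.Q × ℤ)}
    (hl : M.δ q σ (decide (n = 0)) = uniformKernel l) :
    M.stepD (M.dirac (q, n)) σ =
      (l.length : ℝ)⁻¹ • (l.map fun x => M.dirac (x.1, n + x.2)).sum := by
  rw [stepD_dirac, hl]
  ext ⟨q', k⟩
  have hx : ∀ x : M.Q × ℤ, ((q', k) = (x.1, n + x.2)) ↔ x = (q', k - n) := by
    rintro ⟨q'', c⟩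
    simp only [Prod.mk.injEq]
    constructor <;> rintro ⟨rfl, h⟩ <;> exact ⟨rfl, by omega⟩
  simp only [uniformKernel, Multiset.coe_count, dirac, Pi.smul_apply, Pi.list_sum_apply,
    List.map_map, Function.comp_def, Pi.single_apply, hx, List.sum_map_ite_eq, List.map_const',
    List.sum_replicate, smul_zero, add_zero, nsmul_eq_mul, sub_zero, mul_one, smul_eq_mul]
  ring

lemma stepD_dirac_of_single {q q' : M.Q} {n c : ℤ} {σ : TSym α}
    (hl : M.δ q σ (decide (n = 0)) = uniformKernel [(q', c)]) :
    M.stepD (M.dirac (q, n)) σ = M.dirac (q', n + c) := by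
  simp [M.stepD_dirac_of_uniform hl]

lemma tsum_ite_lvdec_smul_dirac (ℓ : LVDec) (a b : ℝ) (x y : M.Q × ℤ) :
    ∑' p : M.Q × ℤ, (if M.lvdec p.1 = ℓ then (a • M.dirac x + b • M.dirac y) p else 0) =
      (if M.lvdec x.1 = ℓ then a else 0) + (if M.lvdec y.1 = ℓ then b else 0) := by
  have h : (fun p : M.Q × ℤ => if M.lvdec p.1 = ℓ then (a • M.dirac x + b • M.dirac y) p else 0) =
      fun p => Pi.single x (if M.lvdec x.1 = ℓ then a else 0) p +
        Pi.single y (if M.lvdec y.1 = ℓ then b else 0) p := by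
    ext p
    simp only [dirac, Pi.add_apply, Pi.smul_apply, Pi.single_apply, smul_eq_mul]
    split_ifs <;> simp_all
  rw [h, Summable.tsum_add (hasSum_pi_single _ _).summable (hasSum_pi_single _ _).summable,
    tsum_pi_single, tsum_pi_single]

end LasVegas1P1CA

namespace OneNone

inductive Mode : Type
  | ab | bc | ca
deriving DecidableEq

instance : Fintype Mode := ⟨{.ab, .bc, .ca}, fun E => by cases E <;> simp⟩

def Mode.fst : Mode → ΓN
  | .ab => .a
  | .bc => .b
  | .ca => .c

def Mode.snd : Mode → ΓN
  | .ab => .b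
  | .bc => .c
  | .ca => .a

def Mode.weight (E : Mode) (x : ΓN) : ℤ :=
  (if x = E.fst then 1 else 0) - (if x = E.snd then 1 else 0)

lemma Mode.abs_weight_le (E : Mode) (x : ΓN) : |E.weight x| ≤ 1 := by
  cases E <;> cases x <;> simp [Mode.weight, Mode.fst, Mode.snd]

lemma Mode.sum_map_weight (E : Mode) (u : List ΓN) :
    (u.map E.weight).sum = (u.count E.fst : ℤ) - u.count E.snd := by
  induction u with
  | nil => simp
  | cons x u ih =>
    simp only [List.map_cons, List.sum_cons, ih, List.count_cons, beq_iff_eq, Mode.weight]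
    push_cast
    ring

lemma Mode.abs_sum_map_weight_le (E : Mode) (u : List ΓN) :
    |(u.map E.weight).sum| ≤ u.length := by
  induction u with
  | nil => simp
  | cons x u ih =>
    simp only [List.map_cons, List.sum_cons, List.length_cons, Nat.cast_succ]
    linarith [abs_add_le (E.weight x) (u.map E.weight).sum, E.abs_weight_le x]

lemma eqAB_iff (u : List ΓN) : eqAB u ↔ (u.map Mode.ab.weight).sum = 0 := by
  rw [Mode.sum_map_weight, sub_eq_zero, Nat.cast_inj]; rfl

lemma eqBC_iff (u : List ΓN) : eqBC u ↔ (u.map Mode.bc.weight).sum = 0 := by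
  rw [Mode.sum_map_weight, sub_eq_zero, Nat.cast_inj]; rfl

lemma eqCA_iff (u : List ΓN) : eqCA u ↔ (u.map Mode.ca.weight).sum = 0 := by
  rw [Mode.sum_map_weight, sub_eq_zero, Nat.cast_inj]; rfl

/- In a check state the difference `d` of the two counts is kept in sign–magnitude form: the
counter holds `|d|` and the bit `s` the sign of `d` (arbitrary when `d = 0`). `smUpdate s z v` is
the new sign bit and the counter increment when `v` is added to `d`, `z` being the zero-test of
the counter. -/
def smUpdate (s z : Bool) (v : ℤ) : Bool × ℤ :=
  if v = 0 then (s, 0) else if z || s == decide (0 < v) then (decide (0 < v), 1) else (s, -1)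

lemma abs_smUpdate_le (s z : Bool) (v : ℤ) : |(smUpdate s z v).2| ≤ 1 := by
  unfold smUpdate; split_ifs <;> simp

lemma smUpdate_spec {s : Bool} {d v : ℤ} (hs : d ≠ 0 → s = decide (0 < d)) (hv : |v| ≤ 1) :
    |d| + (smUpdate s (decide (|d| = 0)) v).2 = |d + v| ∧
      (d + v ≠ 0 → (smUpdate s (decide (|d| = 0)) v).1 = decide (0 < d + v)) := by
  have hv' : v = -1 ∨ v = 0 ∨ v = 1 := by rw [abs_le] at hv; omega
  rcases lt_trichotomy d 0 with hd | rfl | hd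
  · obtain rfl : s = false := by simpa [hd.not_gt] using hs hd.ne
    rw [abs_of_neg hd, abs_of_nonpos (by omega : d + v ≤ 0)]
    rcases hv' with rfl | rfl | rfl <;> simp [smUpdate, hd.ne] <;> omega
  · rcases hv' with rfl | rfl | rfl <;> simp [smUpdate]
  · obtain rfl : s = true := by simpa [hd] using hs hd.ne'
    rw [abs_of_pos hd, abs_of_nonneg (by omega : 0 ≤ d + v)]
    rcases hv' with rfl | rfl | rfl <;> simp [smUpdate, hd.ne'] <;> omega

-- `p` is the verdict issued if the test of the current block succeeds.
inductive State : Type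
  | halt (b : Bool)
  | wait (p : Bool)
  | check (p : Bool) (E : Mode) (s : Bool)
deriving DecidableEq, Fintype

def modes : List Mode := [.ab, .bc, .ca]

def checkMove (p : Bool) (E : Mode) (s z : Bool) (x : ΓN) : State × ℤ :=
  (.check p E (smUpdate s z (E.weight x)).1, (smUpdate s z (E.weight x)).2)

def moves : State → TSym ΓN → Bool → List (State × ℤ)
  | .wait p, .letter .d, z => [(.wait p, if z then 0 else -1)]
  | .wait p, .letter x, z => modes.map fun E => checkMove p E true z x
  | .check p _ _, .letter .d, true => [(.halt p, 0)]
  | .check p _ _, .letter .d, false => [(.wait (!p), -1)]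
  | .check p E s, .letter x, z => [checkMove p E s z x]
  | q, _, _ => [(q, 0)]

lemma moves_ne_nil (q : State) (σ : TSym ΓN) (z : Bool) : moves q σ z ≠ [] := by
  unfold moves; split <;> simp [modes]

lemma abs_le_of_mem_moves {q : State} {σ : TSym ΓN} {z : Bool} {x : State × ℤ}
    (hx : x ∈ moves q σ z) : |x.2| ≤ 1 := by
  unfold moves at hx
  split at hx <;> simp only [modes, List.map_cons, List.map_nil, List.mem_cons, List.mem_nil_iff,
    or_false] at hx
  all_goals
    obtain rfl | rfl | rfl := hx <;>
      first | exact abs_smUpdate_le _ _ _ | (split_ifs <;> simp) | simp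

noncomputable def machine : LasVegas1P1CA ΓN where
  Q := State
  q0 := .wait true
  lvdec
    | .halt true => .acc
    | .halt false => .rej
    | _ => .unk
  m := 1
  δ q σ z := uniformKernel (moves q σ z)
  nonneg _ _ _ _ _ := uniformKernel_nonneg _ _ _
  support _ _ _ _ _ := abs_le_of_uniformKernel_ne_zero fun _ => abs_le_of_mem_moves
  total q σ z := sum_uniformKernel (moves_ne_nil q σ z) fun _ => abs_le_of_mem_moves

open LasVegas1P1CA

-- Stated over `State` because `machine.Q` unfolds to `State` only at default transparency,
-- so `rw` could not use the general lemmas directly.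
lemma stepD_dirac_of_moves (q : State) (n : ℤ) (σ : TSym ΓN) {l : List (State × ℤ)}
    (h : moves q σ (decide (n = 0)) = l) :
    machine.stepD (machine.dirac (q, n)) σ =
      (l.length : ℝ)⁻¹ • (l.map fun x => machine.dirac (x.1, n + x.2)).sum :=
  machine.stepD_dirac_of_uniform (congrArg uniformKernel h)

lemma stepD_dirac_of_moves_single (q : State) (n : ℤ) (σ : TSym ΓN) {q' : State} {c : ℤ}
    (h : moves q σ (decide (n = 0)) = [(q', c)]) :
    machine.stepD (machine.dirac (q, n)) σ = machine.dirac (q', n + c) :=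
  machine.stepD_dirac_of_single (congrArg uniformKernel h)

lemma run_halt (b : Bool) (w : List (TSym ΓN)) :
    machine.run w (machine.dirac (.halt b, 0)) = machine.dirac (.halt b, 0) := by
  induction w with
  | nil => rfl
  | cons σ w ih =>
    rw [run_cons, stepD_dirac_of_moves_single _ _ σ (by cases σ <;> rfl), add_zero, ih]

lemma run_wait_replicate_d (p : Bool) {k : ℕ} {j : ℤ} (h0 : 0 ≤ j) (hk : j ≤ k) :
    machine.run (List.replicate k (.letter .d)) (machine.dirac (.wait p, j)) =
      machine.dirac (.wait p, 0) := by
  induction k generalizing j with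
  | zero =>
    obtain rfl : j = 0 := by omega
    rfl
  | succ k ih =>
    rw [List.replicate_succ, run_cons, stepD_dirac_of_moves_single _ _ _ rfl]
    apply ih <;> split_ifs with h <;> simp only [decide_eq_true_eq] at h <;> omega

lemma moves_check_letter (p : Bool) (E : Mode) (s z : Bool) {x : ΓN} (hx : x ≠ .d) :
    moves (.check p E s) (.letter x) z = [checkMove p E s z x] := by
  cases x <;> first | exact absurd rfl hx | rfl

lemma run_check_letters (p : Bool) (E : Mode) {u : List ΓN} (hu : ∀ x ∈ u, x ≠ .d) {s : Bool}
    {d : ℤ} (hs : d ≠ 0 → s = decide (0 < d)) :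
    ∃ s', machine.run (u.map .letter) (machine.dirac (.check p E s, |d|)) =
      machine.dirac (.check p E s', |d + (u.map E.weight).sum|) := by
  induction u generalizing s d with
  | nil => exact ⟨s, by simp⟩
  | cons x u ih =>
    obtain ⟨habs, hsign⟩ := smUpdate_spec hs (E.abs_weight_le x)
    obtain ⟨s', hs'⟩ := ih (fun y hy => hu y (List.mem_cons_of_mem x hy)) hsign
    refine ⟨s', ?_⟩
    rw [List.map_cons, run_cons,
      stepD_dirac_of_moves_single _ _ _ (moves_check_letter p E s _ (hu x List.mem_cons_self))]
    simp only [habs, hs', List.map_cons, List.sum_cons, add_assoc]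

lemma run_check_replicate_d (p : Bool) (E : Mode) (s : Bool) {k : ℕ} {n : ℤ} (hk : 1 ≤ k)
    (h0 : 0 ≤ n) (hn : n ≤ k) :
    machine.run (List.replicate k (.letter .d)) (machine.dirac (.check p E s, n)) =
      if n = 0 then machine.dirac (.halt p, 0) else machine.dirac (.wait (!p), 0) := by
  obtain ⟨k, rfl⟩ : ∃ k', k = k' + 1 := ⟨k - 1, by omega⟩
  rw [List.replicate_succ, run_cons]
  split_ifs with hn0
  · subst hn0
    rw [stepD_dirac_of_moves_single _ _ _ rfl, add_zero, run_halt]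
  · rw [stepD_dirac_of_moves_single _ _ _ (q' := .wait (!p)) (c := -1) (by simp [hn0, moves])]
    exact run_wait_replicate_d _ (by omega) (by omega)

lemma run_check_block (p : Bool) (E : Mode) {u y : List ΓN} (hu : ∀ x ∈ u, x ≠ .d)
    (hy : ∀ x ∈ y, x = .d) (hlen : u.length ≤ y.length) (hu0 : u ≠ []) :
    machine.run ((u ++ y).map .letter) (machine.dirac (.check p E true, 0)) =
      if (u.map E.weight).sum = 0 then machine.dirac (.halt p, 0)
      else machine.dirac (.wait (!p), 0) := by
  obtain ⟨s', hs'⟩ := run_check_letters p E hu (s := true) (d := 0) (by simp)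
  rw [abs_zero, zero_add] at hs'
  have hk : 1 ≤ y.length := (List.length_pos_iff.2 hu0).trans_le hlen
  rw [List.map_append, run_append, hs', List.eq_replicate_iff.2 ⟨rfl, hy⟩, List.map_replicate,
    run_check_replicate_d _ _ _ hk (abs_nonneg _)
      ((E.abs_sum_map_weight_le u).trans (by exact_mod_cast hlen))]
  simp only [abs_eq_zero]

lemma stepD_wait_letter (p : Bool) {x : ΓN} (hx : x ≠ .d) :
    machine.stepD (machine.dirac (.wait p, 0)) (.letter x) = (3 : ℝ)⁻¹ •
      (modes.map fun E => machine.stepD (machine.dirac (.check p E true, 0)) (.letter x)).sum := by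
  have hmoves : moves (.wait p) (.letter x) (decide ((0 : ℤ) = 0)) =
      modes.map fun E => checkMove p E true true x := by
    cases x <;> first | exact absurd rfl hx | rfl
  simp [stepD_dirac_of_moves _ _ _ hmoves, modes, checkMove,
    stepD_dirac_of_moves_single _ _ _ (moves_check_letter p _ true _ hx)]

lemma run_wait_block (p : Bool) {u y : List ΓN} (hu : ∀ x ∈ u, x ≠ .d) (hy : ∀ x ∈ y, x = .d)
    (hlen : u.length ≤ y.length) (hu0 : u ≠ []) :
    machine.run ((u ++ y).map .letter) (machine.dirac (.wait p, 0)) = (3 : ℝ)⁻¹ •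
      (modes.map fun E => if (u.map E.weight).sum = 0 then machine.dirac (.halt p, 0)
        else machine.dirac (.wait (!p), 0)).sum := by
  obtain ⟨x, u', rfl⟩ := List.exists_cons_of_ne_nil hu0
  rw [List.cons_append, List.map_cons, run_cons, stepD_wait_letter p (hu x List.mem_cons_self),
    map_smul, map_list_sum, List.map_map]
  congr 2
  refine List.map_congr_left fun E _ => ?_
  rw [Function.comp_apply, ← run_cons, ← List.map_cons, ← List.cons_append,
    run_check_block p E hu hy hlen hu0]

lemma run_of_mem_ONE {w : List ΓN} (hw : w ∈ ONE) (p : Bool) :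
    machine.run (w.map .letter) (machine.dirac (.wait p, 0)) =
      (3 : ℝ)⁻¹ • machine.dirac (.halt p, 0) + (2 / 3 : ℝ) • machine.dirac (.wait (!p), 0) := by
  obtain ⟨u, y, rfl, hu, hy, hlen, hone⟩ := hw
  have hu0 : u ≠ [] := by
    rintro rfl
    simp [exactlyOne, eqAB, eqBC, eqCA] at hone
  rw [run_wait_block p hu hy hlen hu0]
  simp only [exactlyOne, eqAB_iff, eqBC_iff, eqCA_iff] at hone
  rcases hone with ⟨h₁, h₂, h₃⟩ | ⟨h₁, h₂, h₃⟩ | ⟨h₁, h₂, h₃⟩ <;>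
    simp only [modes, List.map_cons, List.map_nil, List.sum_cons, List.sum_nil, h₁, h₂, h₃,
      if_true, if_false] <;> module

lemma run_of_mem_NONE {w : List ΓN} (hw : w ∈ NONE) (p : Bool) :
    machine.run (w.map .letter) (machine.dirac (.wait p, 0)) = machine.dirac (.wait (!p), 0) := by
  obtain ⟨u, y, rfl, hu, hy, hlen, h₁, h₂, h₃⟩ := hw
  have hu0 : u ≠ [] := by
    rintro rfl
    exact h₁ rfl
  rw [run_wait_block p hu hy hlen hu0]
  simp only [eqAB_iff, eqBC_iff, eqCA_iff] at h₁ h₂ h₃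
  simp only [modes, List.map_cons, List.map_nil, List.sum_cons, List.sum_nil, h₁, h₂, h₃,
    if_false]
  module

lemma run_of_mem_pow {L : Language ΓN} {b : Bool}
    (hL : ∀ w ∈ L, machine.run (w.map .letter) (machine.dirac (.wait true, 0)) =
      (3 : ℝ)⁻¹ • machine.dirac (.halt b, 0) + (2 / 3 : ℝ) • machine.dirac (.wait true, 0))
    {t : ℕ} {w : List ΓN} (hw : w ∈ L ^ t) :
    machine.run (w.map .letter) (machine.dirac (.wait true, 0)) =
      (1 - (2 / 3 : ℝ) ^ t) • machine.dirac (.halt b, 0) +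
        ((2 / 3 : ℝ) ^ t) • machine.dirac (.wait true, 0) := by
  induction t generalizing w with
  | zero =>
    obtain rfl : w = [] := by simpa using hw
    simp
  | succ t ih =>
    rw [pow_succ] at hw
    obtain ⟨w₁, hw₁, w₂, hw₂, rfl⟩ := Language.mem_mul.1 hw
    rw [List.map_append, run_append, ih hw₁, map_add, map_smul, map_smul, run_halt, hL w₂ hw₂]
    module

lemma run_of_mem_ONE_mul_NONE {w : List ΓN} (hw : w ∈ ONE * NONE) :
    machine.run (w.map .letter) (machine.dirac (.wait true, 0)) =
      (3 : ℝ)⁻¹ • machine.dirac (.halt true, 0) + (2 / 3 : ℝ) • machine.dirac (.wait true, 0) := by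
  obtain ⟨w₁, hw₁, w₂, hw₂, rfl⟩ := Language.mem_mul.1 hw
  rw [List.map_append, run_append, run_of_mem_ONE hw₁, map_add, map_smul, map_smul, run_halt,
    run_of_mem_NONE hw₂]
  rfl

lemma run_of_mem_NONE_mul_ONE {w : List ΓN} (hw : w ∈ NONE * ONE) :
    machine.run (w.map .letter) (machine.dirac (.wait true, 0)) =
      (3 : ℝ)⁻¹ • machine.dirac (.halt false, 0) + (2 / 3 : ℝ) • machine.dirac (.wait true, 0) := by
  obtain ⟨w₁, hw₁, w₂, hw₂, rfl⟩ := Language.mem_mul.1 hw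
  rw [List.map_append, run_append, run_of_mem_NONE hw₁, run_of_mem_ONE hw₂]
  rfl

lemma finalD_eq_of_run {w : List ΓN} {a c : ℝ} {b : Bool}
    (h : machine.run (w.map .letter) (machine.dirac (.wait true, 0)) =
      a • machine.dirac (.halt b, 0) + c • machine.dirac (.wait true, 0)) :
    machine.finalD w = a • machine.dirac (.halt b, 0) + c • machine.dirac (.wait true, 0) := by
  rw [finalD_eq_run]
  change machine.run (.cent :: (w.map .letter ++ [.dollar])) (machine.dirac (.wait true, 0)) = _
  rw [run_cons, stepD_dirac_of_moves_single (.wait true) 0 .cent rfl,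
    add_zero, run_append, h, map_add, map_smul, map_smul, run_halt, run_cons, run_nil,
    stepD_dirac_of_moves_single (.wait true) 0 .dollar rfl, add_zero]

lemma accProb_rejProb_of_finalD {w : List ΓN} {a c : ℝ} {b : Bool}
    (h : machine.finalD w = a • machine.dirac (.halt b, 0) + c • machine.dirac (.wait true, 0)) :
    machine.accProb w = (bif b then a else 0) ∧ machine.rejProb w = (bif b then 0 else a) := by
  simp only [accProb, rejProb, h, tsum_ite_lvdec_smul_dirac]
  cases b <;> simp [machine]

end OneNone

open OneNone in
theorem stmt5_general (t : ℕ) : ∃ M : LasVegas1P1CA ΓN,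
    (∀ w ∈ (ONE * NONE) ^ t, 1 - (2 / 3 : ℝ) ^ t ≤ M.accProb w ∧ M.rejProb w = 0) ∧
    (∀ w ∈ (NONE * ONE) ^ t, 1 - (2 / 3 : ℝ) ^ t ≤ M.rejProb w ∧ M.accProb w = 0) := by
  refine ⟨machine, fun w hw => ?_, fun w hw => ?_⟩
  · obtain ⟨hacc, hrej⟩ := accProb_rejProb_of_finalD (b := true)
      (finalD_eq_of_run (run_of_mem_pow (fun _ => run_of_mem_ONE_mul_NONE) hw))
    exact ⟨hacc.ge, hrej⟩
  · obtain ⟨hacc, hrej⟩ := accProb_rejProb_of_finalD (b := false)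
      (finalD_eq_of_run (run_of_mem_pow (fun _ => run_of_mem_NONE_mul_ONE) hw))
    exact ⟨hrej.ge, hacc⟩

/-- for every `t ≥ 1`, a Las Vegas 1P1CA solves `ONE-NONE(t)` with
success probability `1 - (2/3)^t`. -/
theorem stmt5 (t : ℕ) (ht : 1 ≤ t) : ∃ M : LasVegas1P1CA ΓN,
    (∀ w ∈ (ONE * NONE) ^ t, 1 - (2 / 3 : ℝ) ^ t ≤ M.accProb w ∧ M.rejProb w = 0) ∧
    (∀ w ∈ (NONE * ONE) ^ t, 1 - (2 / 3 : ℝ) ^ t ≤ M.rejProb w ∧ M.accProb w = 0) :=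
  stmt5_general t
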